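/- arXiv:math/0309345 — 2 statements merged into one kernel-verified Lean document; each statement's English description precedes it below -/
import Mathlib

section
/- (Σ-completeness of Q.) Every Σ sentence that is true in the standard model ω is provable in Robinson arithmetic Q. -/
namespace Boolos

/-- Terms of the first-order language of arithmetic: variables v₀,v₁,…, 0, successor s, +, ·. -/
inductive Term : Type
  | var : ℕ → Term
  | zero : Term
  | succ : Term → Term
  | add : Term → Term → Term
  | mul : Term → Term → Term
  deriving DecidableEq

/-- Formulas of the first-order language of arithmetic. -/
inductive Formula : Type
  | eq : Term → Term → Formula
  | lt : Term → Term → Formula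
  | not : Formula → Formula
  | and : Formula → Formula → Formula
  | or : Formula → Formula → Formula
  | imp : Formula → Formula → Formula
  | all : ℕ → Formula → Formula
  | ex : ℕ → Formula → Formula
  deriving DecidableEq

/-- The primitive symbols of the language (finitely many apart from the variables). -/
inductive Symbol : Type
  | zero : Symbol
  | succ : Symbol
  | plus : Symbol
  | times : Symbol
  | eqs : Symbol
  | lts : Symbol
  | nots : Symbol
  | ands : Symbol
  | ors : Symbol
  | imps : Symbol
  | alls : Symbol
  | exs : Symbol
  | var : ℕ → Symbol
  deriving DecidableEq

/-- Gödel numbers of the primitive symbols. -/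
def Symbol.code : Symbol → ℕ
  | .zero => 1
  | .succ => 2
  | .plus => 3
  | .times => 4
  | .eqs => 5
  | .lts => 6
  | .nots => 7
  | .ands => 8
  | .ors => 9
  | .imps => 10
  | .alls => 11
  | .exs => 12
  | .var n => 13 + n

/-- The sequence of symbols occurring in a term. -/
def Term.symbols : Term → List Symbol
  | .var i => [.var i]
  | .zero => [.zero]
  | .succ t => .succ :: t.symbols
  | .add t u => t.symbols ++ .plus :: u.symbols
  | .mul t u => t.symbols ++ .times :: u.symbols

/-- The sequence of symbols occurring in a formula. -/
def Formula.symbols : Formula → List Symbol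
  | .eq t u => t.symbols ++ .eqs :: u.symbols
  | .lt t u => t.symbols ++ .lts :: u.symbols
  | .not φ => .nots :: φ.symbols
  | .and φ ψ => φ.symbols ++ .ands :: ψ.symbols
  | .or φ ψ => φ.symbols ++ .ors :: ψ.symbols
  | .imp φ ψ => φ.symbols ++ .imps :: ψ.symbols
  | .all i φ => .alls :: .var i :: φ.symbols
  | .ex i φ => .exs :: .var i :: φ.symbols

/-- |e| : the length (number of symbols) of a term. -/
def Term.length (t : Term) : ℕ := t.symbols.length

/-- |μ| : the length (number of symbols) of a formula. -/
def Formula.length (φ : Formula) : ℕ := φ.symbols.length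

/-- A fixed standard (pairing-based, injective) Gödel numbering of terms. -/
def Term.code : Term → ℕ
  | .var i => Nat.pair 0 i
  | .zero => Nat.pair 1 0
  | .succ t => Nat.pair 2 t.code
  | .add t u => Nat.pair 3 (Nat.pair t.code u.code)
  | .mul t u => Nat.pair 4 (Nat.pair t.code u.code)

/-- ⌜μ⌝ : the Gödel number of a formula. -/
def Formula.gnum : Formula → ℕ
  | .eq t u => Nat.pair 0 (Nat.pair t.code u.code)
  | .lt t u => Nat.pair 1 (Nat.pair t.code u.code)
  | .not φ => Nat.pair 2 φ.gnum
  | .and φ ψ => Nat.pair 3 (Nat.pair φ.gnum ψ.gnum)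
  | .or φ ψ => Nat.pair 4 (Nat.pair φ.gnum ψ.gnum)
  | .imp φ ψ => Nat.pair 5 (Nat.pair φ.gnum ψ.gnum)
  | .all i φ => Nat.pair 6 (Nat.pair i φ.gnum)
  | .ex i φ => Nat.pair 7 (Nat.pair i φ.gnum)

/-- The variables occurring in a term. -/
def Term.varsOf : Term → Finset ℕ
  | .var i => {i}
  | .zero => ∅
  | .succ t => t.varsOf
  | .add t u => t.varsOf ∪ u.varsOf
  | .mul t u => t.varsOf ∪ u.varsOf

/-- All variables (free or bound) occurring in a formula. -/
def Formula.allVars : Formula → Finset ℕ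
  | .eq t u => t.varsOf ∪ u.varsOf
  | .lt t u => t.varsOf ∪ u.varsOf
  | .not φ => φ.allVars
  | .and φ ψ => φ.allVars ∪ ψ.allVars
  | .or φ ψ => φ.allVars ∪ ψ.allVars
  | .imp φ ψ => φ.allVars ∪ ψ.allVars
  | .all i φ => insert i φ.allVars
  | .ex i φ => insert i φ.allVars

/-- The free variables of a formula. -/
def Formula.freeVars : Formula → Finset ℕ
  | .eq t u => t.varsOf ∪ u.varsOf
  | .lt t u => t.varsOf ∪ u.varsOf
  | .not φ => φ.freeVars
  | .and φ ψ => φ.freeVars ∪ ψ.freeVars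
  | .or φ ψ => φ.freeVars ∪ ψ.freeVars
  | .imp φ ψ => φ.freeVars ∪ ψ.freeVars
  | .all i φ => φ.freeVars.erase i
  | .ex i φ => φ.freeVars.erase i

/-- Substitution of a term for a variable in a term. -/
def Term.subst : Term → ℕ → Term → Term
  | .var i, x, s => if i = x then s else .var i
  | .zero, _, _ => .zero
  | .succ t, x, s => .succ (t.subst x s)
  | .add t u, x, s => .add (t.subst x s) (u.subst x s)
  | .mul t u, x, s => .mul (t.subst x s) (u.subst x s)

/-- Substitution of a term for the free occurrences of a variable in a formula. -/
def Formula.subst : Formula → ℕ → Term → Formula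
  | .eq t u, x, s => .eq (t.subst x s) (u.subst x s)
  | .lt t u, x, s => .lt (t.subst x s) (u.subst x s)
  | .not φ, x, s => .not (φ.subst x s)
  | .and φ ψ, x, s => .and (φ.subst x s) (ψ.subst x s)
  | .or φ ψ, x, s => .or (φ.subst x s) (ψ.subst x s)
  | .imp φ ψ, x, s => .imp (φ.subst x s) (ψ.subst x s)
  | .all i φ, x, s => if i = x then .all i φ else .all i (φ.subst x s)
  | .ex i φ, x, s => if i = x then .ex i φ else .ex i (φ.subst x s)

/-- The number of occurrences of a variable in a term. -/
def Term.countOcc : Term → ℕ → ℕ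
  | .var i, x => if i = x then 1 else 0
  | .zero, _ => 0
  | .succ t, x => t.countOcc x
  | .add t u, x => t.countOcc x + u.countOcc x
  | .mul t u, x => t.countOcc x + u.countOcc x

/-- The number of free occurrences of a variable in a formula. -/
def Formula.countFreeOcc : Formula → ℕ → ℕ
  | .eq t u, x => t.countOcc x + u.countOcc x
  | .lt t u, x => t.countOcc x + u.countOcc x
  | .not φ, x => φ.countFreeOcc x
  | .and φ ψ, x => φ.countFreeOcc x + ψ.countFreeOcc x
  | .or φ ψ, x => φ.countFreeOcc x + ψ.countFreeOcc x
  | .imp φ ψ, x => φ.countFreeOcc x + ψ.countFreeOcc x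
  | .all i φ, x => if i = x then 0 else φ.countFreeOcc x
  | .ex i φ, x => if i = x then 0 else φ.countFreeOcc x

/-- The numeral s s … s 0 for a natural number. -/
def numeral : ℕ → Term
  | 0 => .zero
  | n + 1 => .succ (numeral n)

/-- Structures for the language of arithmetic. -/
structure Struct where
  carrier : Type
  zero : carrier
  succ : carrier → carrier
  add : carrier → carrier → carrier
  mul : carrier → carrier → carrier
  lt : carrier → carrier → Prop

/-- The value of a term in a structure under an assignment. -/
def Term.val (M : Struct) (v : ℕ → M.carrier) : Term → M.carrier
  | .var i => v i
  | .zero => M.zero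
  | .succ t => M.succ (Term.val M v t)
  | .add t u => M.add (Term.val M v t) (Term.val M v u)
  | .mul t u => M.mul (Term.val M v t) (Term.val M v u)

/-- Satisfaction of a formula in a structure under an assignment. -/
def Formula.Realize (M : Struct) : (ℕ → M.carrier) → Formula → Prop
  | v, .eq t u => Term.val M v t = Term.val M v u
  | v, .lt t u => M.lt (Term.val M v t) (Term.val M v u)
  | v, .not φ => ¬ Formula.Realize M v φ
  | v, .and φ ψ => Formula.Realize M v φ ∧ Formula.Realize M v ψ
  | v, .or φ ψ => Formula.Realize M v φ ∨ Formula.Realize M v ψ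
  | v, .imp φ ψ => Formula.Realize M v φ → Formula.Realize M v ψ
  | v, .all i φ => ∀ a : M.carrier, Formula.Realize M (Function.update v i a) φ
  | v, .ex i φ => ∃ a : M.carrier, Formula.Realize M (Function.update v i a) φ

/-- ω : the standard model of arithmetic. -/
@[reducible] def stdModel : Struct :=
  { carrier := ℕ, zero := 0, succ := Nat.succ, add := (· + ·), mul := (· * ·),
    lt := (· < ·) }

/-- A formula is true if it holds in the standard model ω (under every assignment). -/
def IsTrue (φ : Formula) : Prop := ∀ v : ℕ → ℕ, Formula.Realize stdModel v φ

/-- The value of a (closed) term in the standard model ω. -/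
def Term.valNat (t : Term) : ℕ := Term.val stdModel (fun _ => 0) t

/-- A sentence is a formula with no free variables. -/
def Formula.IsSentence (φ : Formula) : Prop := φ.freeVars = ∅

/-- Provability from a theory; by the Gödel completeness theorem, identified with
semantic consequence. -/
def Proves (T : Set Formula) (φ : Formula) : Prop :=
  ∀ (M : Struct) (v : ℕ → M.carrier),
    (∀ ψ ∈ T, Formula.Realize M v ψ) → Formula.Realize M v φ

/-- Consistency: no formula is both provable and refutable. -/
def Consistent (T : Set Formula) : Prop :=
  ¬ ∃ φ : Formula, Proves T φ ∧ Proves T (.not φ)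

/-- The biconditional, as an abbreviation. -/
def Formula.iffF (φ ψ : Formula) : Formula := .and (.imp φ ψ) (.imp ψ φ)

def v0 : Term := .var 0
def v1 : Term := .var 1
def v2 : Term := .var 2

/-- The axioms of Robinson arithmetic Q (with < defined as usual). -/
def QAxioms : Set Formula :=
  { .all 0 (.all 1 (.imp (.eq (.succ v0) (.succ v1)) (.eq v0 v1))),
    .all 0 (.not (.eq (.succ v0) .zero)),
    .all 0 (.imp (.not (.eq v0 .zero)) (.ex 1 (.eq v0 (.succ v1)))),
    .all 0 (.eq (.add v0 .zero) v0),
    .all 0 (.all 1 (.eq (.add v0 (.succ v1)) (.succ (.add v0 v1)))),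
    .all 0 (.eq (.mul v0 .zero) .zero),
    .all 0 (.all 1 (.eq (.mul v0 (.succ v1)) (.add (.mul v0 v1) v0))),
    .all 0 (.all 1 (Formula.iffF (.lt v0 v1) (.ex 2 (.eq (.add v2 (.succ v0)) v1)))) }

/-- Pr_S : the set of Gödel numbers of sentences provable in S. -/
def PrSet (T : Set Formula) : Set ℕ :=
  {m | ∃ σ : Formula, σ.IsSentence ∧ Proves T σ ∧ m = σ.gnum}

/-- A formula μ with at most the free variable v₀ names the number i in T
if T ⊢ (∀v₀)(μ(v₀) ↔ v₀ = i). -/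
def Names (T : Set Formula) (μ : Formula) (i : ℕ) : Prop :=
  μ.freeVars ⊆ {0} ∧ Proves T (.all 0 (Formula.iffF μ (.eq v0 (numeral i))))

/-- i is named in T by some formula of length < m. -/
def Nameable (T : Set Formula) (m i : ℕ) : Prop :=
  ∃ μ : Formula, μ.length < m ∧ Names T μ i

/-- φ(v₀) defines the set A in the standard model ω. -/
def DefinesSet (φ : Formula) (A : Set ℕ) : Prop :=
  φ.freeVars ⊆ {0} ∧ ∀ i : ℕ, i ∈ A ↔ IsTrue (φ.subst 0 (numeral i))

/-- A set of natural numbers is definable (in ω). -/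
def Definable (A : Set ℕ) : Prop := ∃ φ : Formula, DefinesSet φ A

/-- φ(v₀,v₁) defines the binary relation R in the standard model ω. -/
def DefinesRel (φ : Formula) (R : ℕ → ℕ → Prop) : Prop :=
  φ.freeVars ⊆ {0, 1} ∧
    ∀ i j : ℕ, R i j ↔ IsTrue ((φ.subst 0 (numeral i)).subst 1 (numeral j))

/-- The relation B of Boolos's construction: (i,j) ∈ B iff some formula μ with at most
the free variable v₀, with ⌜μ⌝ < g(j) and |μ| < j, names i. -/
def BRel (T : Set Formula) (g : ℕ → ℕ) (i j : ℕ) : Prop :=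
  ∃ μ : Formula, μ.gnum < g j ∧ μ.length < j ∧ Names T μ i

/-- g is a recursive function bounding Gödel numbers in terms of length, as in the
construction: whenever all variables of μ are among the first j ones and |μ| < j,
we have ⌜μ⌝ < g(j). -/
def GoodBound (g : ℕ → ℕ) : Prop :=
  Computable g ∧
    ∀ (μ : Formula) (j : ℕ), μ.allVars ⊆ Finset.range j → μ.length < j → μ.gnum < g j

/-- ψ(v₀,v₁) ≔ ¬φ(v₀,v₁) ∧ (∀v₂ < v₀) φ(v₂,v₁). -/
def psiOf (φ : Formula) : Formula :=
  .and (.not φ) (.all 2 (.imp (.lt v2 v0) (φ.subst 0 v2)))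

/-- The closed term t ≔ 10·(k·k). -/
def tTerm (k : ℕ) : Term := .mul (numeral 10) (.mul (numeral k) (numeral k))

/-- Δ₀ (bounded) formulas. -/
inductive IsDelta0 : Formula → Prop
  | eq (t u : Term) : IsDelta0 (.eq t u)
  | lt (t u : Term) : IsDelta0 (.lt t u)
  | not {φ : Formula} : IsDelta0 φ → IsDelta0 (.not φ)
  | and {φ ψ : Formula} : IsDelta0 φ → IsDelta0 ψ → IsDelta0 (.and φ ψ)
  | or {φ ψ : Formula} : IsDelta0 φ → IsDelta0 ψ → IsDelta0 (.or φ ψ)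
  | imp {φ ψ : Formula} : IsDelta0 φ → IsDelta0 ψ → IsDelta0 (.imp φ ψ)
  | ball {φ : Formula} (i : ℕ) (t : Term) : i ∉ t.varsOf → IsDelta0 φ →
      IsDelta0 (.all i (.imp (.lt (.var i) t) φ))
  | bex {φ : Formula} (i : ℕ) (t : Term) : i ∉ t.varsOf → IsDelta0 φ →
      IsDelta0 (.ex i (.and (.lt (.var i) t) φ))

/-- The smallest class of formulas containing the Δ₀ formulas and closed under
conjunction, disjunction, existential quantification and bounded universal
quantification. -/
inductive SigmaForm : Formula → Prop
  | delta0 {φ : Formula} : IsDelta0 φ → SigmaForm φ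
  | and {φ ψ : Formula} : SigmaForm φ → SigmaForm ψ → SigmaForm (.and φ ψ)
  | or {φ ψ : Formula} : SigmaForm φ → SigmaForm ψ → SigmaForm (.or φ ψ)
  | ex {φ : Formula} (i : ℕ) : SigmaForm φ → SigmaForm (.ex i φ)
  | ball {φ : Formula} (i : ℕ) (t : Term) : i ∉ t.varsOf → SigmaForm φ →
      SigmaForm (.all i (.imp (.lt (.var i) t) φ))

/-- A formula is Σ if it is provably equivalent in Q to a formula of the above class. -/
def IsSigma (φ : Formula) : Prop :=
  ∃ ψ : Formula, SigmaForm ψ ∧ Proves QAxioms (Formula.iffF φ ψ)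

/-! ### Auxiliary lemmas for Σ-completeness -/

/-- Interpretation of numerals in a structure. -/
def numM (M : Struct) : ℕ → M.carrier
  | 0 => M.zero
  | n + 1 => M.succ (numM M n)

lemma val_numeral (M : Struct) (v : ℕ → M.carrier) (n : ℕ) :
    Term.val M v (numeral n) = numM M n := by
  induction n with
  | zero => rfl
  | succ n ih => simp [numeral, Term.val, numM, ih]

/-- The algebraic content of the Q axioms. -/
structure QModel (M : Struct) : Prop where
  q1 : ∀ a b : M.carrier, M.succ a = M.succ b → a = b
  q2 : ∀ a : M.carrier, ¬ M.succ a = M.zero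
  q3 : ∀ a : M.carrier, ¬ a = M.zero → ∃ b, a = M.succ b
  q4 : ∀ a : M.carrier, M.add a M.zero = a
  q5 : ∀ a b : M.carrier, M.add a (M.succ b) = M.succ (M.add a b)
  q6 : ∀ a : M.carrier, M.mul a M.zero = M.zero
  q7 : ∀ a b : M.carrier, M.mul a (M.succ b) = M.add (M.mul a b) a
  q8 : ∀ a b : M.carrier, M.lt a b ↔ ∃ c, M.add c (M.succ a) = b

lemma qModel_of_realize {M : Struct} {v : ℕ → M.carrier}
    (h : ∀ ψ ∈ QAxioms, Formula.Realize M v ψ) : QModel M := by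
  have h1 := h (.all 0 (.all 1 (.imp (.eq (.succ v0) (.succ v1)) (.eq v0 v1))))
    (by simp [QAxioms])
  have h2 := h (.all 0 (.not (.eq (.succ v0) .zero))) (by simp [QAxioms])
  have h3 := h (.all 0 (.imp (.not (.eq v0 .zero)) (.ex 1 (.eq v0 (.succ v1)))))
    (by simp [QAxioms])
  have h4 := h (.all 0 (.eq (.add v0 .zero) v0)) (by simp [QAxioms])
  have h5 := h (.all 0 (.all 1 (.eq (.add v0 (.succ v1)) (.succ (.add v0 v1)))))
    (by simp [QAxioms])
  have h6 := h (.all 0 (.eq (.mul v0 .zero) .zero)) (by simp [QAxioms])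
  have h7 := h (.all 0 (.all 1 (.eq (.mul v0 (.succ v1)) (.add (.mul v0 v1) v0))))
    (by simp [QAxioms])
  have h8 := h (.all 0 (.all 1 (Formula.iffF (.lt v0 v1)
      (.ex 2 (.eq (.add v2 (.succ v0)) v1))))) (by simp [QAxioms])
  simp only [Formula.Realize, Term.val, v0, v1, v2, Formula.iffF] at h1 h2 h3 h4 h5 h6 h7 h8
  refine ⟨?_, ?_, ?_, ?_, ?_, ?_, ?_, ?_⟩
  · intro a b hab
    have := h1 a b
    simpa [Function.update] using this (by simpa [Function.update] using hab)
  · intro a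
    simpa [Function.update] using h2 a
  · intro a ha
    have := h3 a (by simpa [Function.update] using ha)
    obtain ⟨b, hb⟩ := this
    exact ⟨b, by simpa [Function.update] using hb⟩
  · intro a; simpa [Function.update] using h4 a
  · intro a b; simpa [Function.update] using h5 a b
  · intro a; simpa [Function.update] using h6 a
  · intro a b; simpa [Function.update] using h7 a b
  · intro a b
    constructor
    · intro hab
      obtain ⟨c, hc⟩ := (h8 a b).1 (by simpa [Function.update] using hab)
      exact ⟨c, by simpa [Function.update] using hc⟩
    · rintro ⟨c, hc⟩
      have := (h8 a b).2 ⟨c, by simpa [Function.update] using hc⟩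
      simpa [Function.update] using this

section QModelFacts

variable {M : Struct} (hM : QModel M)

include hM

lemma numM_add (i j : ℕ) : M.add (numM M i) (numM M j) = numM M (i + j) := by
  induction j with
  | zero => simpa [numM] using hM.q4 (numM M i)
  | succ j ih => simp [numM, hM.q5, ih, Nat.add_succ]

lemma numM_mul (i j : ℕ) : M.mul (numM M i) (numM M j) = numM M (i * j) := by
  induction j with
  | zero => simpa [numM] using hM.q6 (numM M i)
  | succ j ih =>
    simp only [numM, hM.q7, ih]
    rw [numM_add hM, Nat.mul_succ]

lemma numM_inj : ∀ {i j : ℕ}, numM M i = numM M j → i = j := by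
  intro i
  induction i with
  | zero =>
    intro j h
    cases j with
    | zero => rfl
    | succ j => exact absurd h.symm (hM.q2 _)
  | succ i ih =>
    intro j h
    cases j with
    | zero => exact absurd h (hM.q2 _)
    | succ j => exact congrArg Nat.succ (ih (hM.q1 _ _ h))

lemma numM_lt {i j : ℕ} (hij : i < j) : M.lt (numM M i) (numM M j) := by
  refine (hM.q8 _ _).2 ⟨numM M (j - i - 1), ?_⟩
  have : M.succ (numM M i) = numM M (i + 1) := rfl
  rw [this, numM_add hM]
  congr 1
  omega

lemma lt_numM {a : M.carrier} : ∀ {j : ℕ}, M.lt a (numM M j) → ∃ m, m < j ∧ a = numM M m := by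
  intro j
  induction j generalizing a with
  | zero =>
    intro h
    obtain ⟨c, hc⟩ := (hM.q8 _ _).1 h
    rw [show numM M 0 = M.zero from rfl, hM.q5] at hc
    exact absurd hc (hM.q2 _)
  | succ j ih =>
    intro h
    obtain ⟨c, hc⟩ := (hM.q8 _ _).1 h
    by_cases ha : a = M.zero
    · exact ⟨0, Nat.succ_pos j, ha⟩
    · obtain ⟨b, rfl⟩ := hM.q3 a ha
      rw [hM.q5] at hc
      have hc' : M.add c (M.succ b) = numM M j :=
        hM.q1 _ _ (by rw [hc]; rfl)
      have hb : M.lt b (numM M j) := (hM.q8 _ _).2 ⟨c, hc'⟩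
      obtain ⟨m, hm, rfl⟩ := ih hb
      exact ⟨m + 1, by omega, rfl⟩

end QModelFacts

lemma Term.val_ext {M : Struct} {v w : ℕ → M.carrier} :
    ∀ {t : Term}, (∀ i ∈ t.varsOf, v i = w i) → Term.val M v t = Term.val M w t := by
  intro t
  induction t with
  | var i => intro h; exact h i (by simp [Term.varsOf])
  | zero => intro _; rfl
  | succ t ih => intro h; simp [Term.val, ih (fun i hi => h i (by simpa [Term.varsOf] using hi))]
  | add t u iht ihu =>
    intro h
    simp [Term.val, iht (fun i hi => h i (by simp [Term.varsOf, hi])),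
      ihu (fun i hi => h i (by simp [Term.varsOf, hi]))]
  | mul t u iht ihu =>
    intro h
    simp [Term.val, iht (fun i hi => h i (by simp [Term.varsOf, hi])),
      ihu (fun i hi => h i (by simp [Term.varsOf, hi]))]

lemma Formula.realize_ext {M : Struct} :
    ∀ {φ : Formula} {v w : ℕ → M.carrier}, (∀ i ∈ φ.freeVars, v i = w i) →
      (Formula.Realize M v φ ↔ Formula.Realize M w φ) := by
  intro φ
  induction φ with
  | eq t u =>
    intro v w h
    simp only [Formula.Realize]
    rw [Term.val_ext (fun i hi => h i (by simp [Formula.freeVars, hi])),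
      Term.val_ext (M := M) (t := u) (fun i hi => h i (by simp [Formula.freeVars, hi]))]
  | lt t u =>
    intro v w h
    simp only [Formula.Realize]
    rw [Term.val_ext (fun i hi => h i (by simp [Formula.freeVars, hi])),
      Term.val_ext (M := M) (t := u) (fun i hi => h i (by simp [Formula.freeVars, hi]))]
  | not φ ih => intro v w h; simp only [Formula.Realize]; rw [ih h]
  | and φ ψ ihφ ihψ =>
    intro v w h
    simp only [Formula.Realize]
    rw [ihφ (fun i hi => h i (by simp [Formula.freeVars, hi])),
      ihψ (fun i hi => h i (by simp [Formula.freeVars, hi]))]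
  | or φ ψ ihφ ihψ =>
    intro v w h
    simp only [Formula.Realize]
    rw [ihφ (fun i hi => h i (by simp [Formula.freeVars, hi])),
      ihψ (fun i hi => h i (by simp [Formula.freeVars, hi]))]
  | imp φ ψ ihφ ihψ =>
    intro v w h
    simp only [Formula.Realize]
    rw [ihφ (fun i hi => h i (by simp [Formula.freeVars, hi])),
      ihψ (fun i hi => h i (by simp [Formula.freeVars, hi]))]
  | all j φ ih =>
    intro v w h
    simp only [Formula.Realize]
    refine forall_congr' fun a => ih fun i hi => ?_
    by_cases hij : i = j
    · subst hij; simp [Function.update]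
    · simp only [Function.update, dif_neg hij]
      exact h i (by simp [Formula.freeVars, Finset.mem_erase, hij, hi])
  | ex j φ ih =>
    intro v w h
    simp only [Formula.Realize]
    refine exists_congr fun a => ih fun i hi => ?_
    by_cases hij : i = j
    · subst hij; simp [Function.update]
    · simp only [Function.update, dif_neg hij]
      exact h i (by simp [Formula.freeVars, Finset.mem_erase, hij, hi])

lemma term_val_numM {M : Struct} (hM : QModel M) (v : ℕ → ℕ) :
    ∀ t : Term, Term.val M (fun i => numM M (v i)) t = numM M (Term.val stdModel v t) := by
  intro t
  induction t with
  | var i => rfl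
  | zero => rfl
  | succ t ih => simp [Term.val, ih]; rfl
  | add t u iht ihu => simp [Term.val, iht, ihu, numM_add hM]
  | mul t u iht ihu => simp [Term.val, iht, ihu, numM_mul hM]

lemma update_numM {M : Struct} (v : ℕ → ℕ) (i m : ℕ) :
    (fun j => numM M (Function.update v i m j)) =
      Function.update (fun j => numM M (v j)) i (numM M m) := by
  funext j
  by_cases hij : j = i
  · subst hij; simp
  · simp [Function.update, hij]

lemma delta0_transfer {M : Struct} (hM : QModel M) :
    ∀ {φ : Formula}, IsDelta0 φ → ∀ v : ℕ → ℕ,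
      (Formula.Realize stdModel v φ ↔ Formula.Realize M (fun i => numM M (v i)) φ) := by
  intro φ hφ
  induction hφ with
  | eq t u =>
    intro v
    simp only [Formula.Realize, term_val_numM hM]
    exact ⟨fun h => by rw [h], fun h => numM_inj hM h⟩
  | lt t u =>
    intro v
    simp only [Formula.Realize, term_val_numM hM]
    constructor
    · exact fun h => numM_lt hM h
    · intro h
      obtain ⟨m, hm, he⟩ := lt_numM hM h
      exact numM_inj hM he ▸ hm
  | not _ ih => intro v; simp only [Formula.Realize]; rw [ih v]
  | and _ _ ih1 ih2 => intro v; simp only [Formula.Realize]; rw [ih1 v, ih2 v]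
  | or _ _ ih1 ih2 => intro v; simp only [Formula.Realize]; rw [ih1 v, ih2 v]
  | imp _ _ ih1 ih2 => intro v; simp only [Formula.Realize]; rw [ih1 v, ih2 v]
  | ball i t hit _ ih =>
    intro v
    simp only [Formula.Realize, Term.val]
    have hvalM : ∀ a : M.carrier,
        Term.val M (Function.update (fun j => numM M (v j)) i a) t =
          numM M (Term.val stdModel v t) := by
      intro a
      have h1 : Term.val M (Function.update (fun j => numM M (v j)) i a) t
          = Term.val M (fun j => numM M (v j)) t := by
        apply Term.val_ext
        intro j hj
        have hji : j ≠ i := fun h => hit (h ▸ hj)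
        simp [Function.update, hji]
      rw [h1, term_val_numM hM]
    have hvalN : ∀ m : ℕ,
        Term.val stdModel (Function.update v i m) t = Term.val stdModel v t := by
      intro m
      apply Term.val_ext
      intro j hj
      have hji : j ≠ i := fun h => hit (h ▸ hj)
      simp [Function.update, hji]
    constructor
    · intro h a ha
      rw [Function.update_self, hvalM] at ha
      obtain ⟨m, hm, rfl⟩ := lt_numM hM ha
      have hstd := h m (by rw [Function.update_self, hvalN]; exact hm)
      rw [← update_numM]
      exact (ih (Function.update v i m)).1 hstd
    · intro h m hm
      have ha := h (numM M m)
      rw [Function.update_self, hvalM] at ha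
      have := ha (numM_lt hM (by rw [hvalN] at hm; simpa using hm))
      rw [← update_numM] at this
      exact (ih (Function.update v i m)).2 this
  | bex i t hit _ ih =>
    intro v
    simp only [Formula.Realize, Term.val]
    have hvalM : ∀ a : M.carrier,
        Term.val M (Function.update (fun j => numM M (v j)) i a) t =
          numM M (Term.val stdModel v t) := by
      intro a
      have h1 : Term.val M (Function.update (fun j => numM M (v j)) i a) t
          = Term.val M (fun j => numM M (v j)) t := by
        apply Term.val_ext
        intro j hj
        have hji : j ≠ i := fun h => hit (h ▸ hj)
        simp [Function.update, hji]
      rw [h1, term_val_numM hM]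
    have hvalN : ∀ m : ℕ,
        Term.val stdModel (Function.update v i m) t = Term.val stdModel v t := by
      intro m
      apply Term.val_ext
      intro j hj
      have hji : j ≠ i := fun h => hit (h ▸ hj)
      simp [Function.update, hji]
    constructor
    · rintro ⟨m, hm, hφm⟩
      refine ⟨numM M m, ?_, ?_⟩
      · rw [Function.update_self, hvalM]
        exact numM_lt hM (by rw [hvalN] at hm; simpa using hm)
      · rw [← update_numM]
        exact (ih (Function.update v i m)).1 hφm
    · rintro ⟨a, ha, hφa⟩
      rw [Function.update_self, hvalM] at ha
      obtain ⟨m, hm, rfl⟩ := lt_numM hM ha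
      refine ⟨m, by rw [hvalN]; simpa using hm, ?_⟩
      rw [← update_numM] at hφa
      exact (ih (Function.update v i m)).2 hφa

lemma sigma_transfer {M : Struct} (hM : QModel M) :
    ∀ {φ : Formula}, SigmaForm φ → ∀ v : ℕ → ℕ,
      Formula.Realize stdModel v φ → Formula.Realize M (fun i => numM M (v i)) φ := by
  intro φ hφ
  induction hφ with
  | delta0 h => intro v hv; exact (delta0_transfer hM h v).1 hv
  | and _ _ ih1 ih2 =>
    intro v hv
    exact ⟨ih1 v hv.1, ih2 v hv.2⟩
  | or _ _ ih1 ih2 =>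
    intro v hv
    rcases hv with h | h
    · exact Or.inl (ih1 v h)
    · exact Or.inr (ih2 v h)
  | ex i _ ih =>
    rintro v ⟨m, hm⟩
    exact ⟨numM M m, by rw [← update_numM]; exact ih (Function.update v i m) hm⟩
  | ball i t hit _ ih =>
    intro v h
    simp only [Formula.Realize, Term.val] at h ⊢
    have hvalM : ∀ a : M.carrier,
        Term.val M (Function.update (fun j => numM M (v j)) i a) t =
          numM M (Term.val stdModel v t) := by
      intro a
      have h1 : Term.val M (Function.update (fun j => numM M (v j)) i a) t
          = Term.val M (fun j => numM M (v j)) t := by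
        apply Term.val_ext
        intro j hj
        have hji : j ≠ i := fun h => hit (h ▸ hj)
        simp [Function.update, hji]
      rw [h1, term_val_numM hM]
    have hvalN : ∀ m : ℕ,
        Term.val stdModel (Function.update v i m) t = Term.val stdModel v t := by
      intro m
      apply Term.val_ext
      intro j hj
      have hji : j ≠ i := fun h => hit (h ▸ hj)
      simp [Function.update, hji]
    intro a ha
    rw [Function.update_self, hvalM] at ha
    obtain ⟨m, hm, rfl⟩ := lt_numM hM ha
    have := h m (by rw [Function.update_self, hvalN]; simpa using hm)
    rw [← update_numM]
    exact ih (Function.update v i m) this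

lemma std_qModel : ∀ v : ℕ → ℕ, ∀ ψ ∈ QAxioms, Formula.Realize stdModel v ψ := by
  intro v ψ hψ
  simp only [QAxioms, Set.mem_insert_iff, Set.mem_singleton_iff] at hψ
  rcases hψ with rfl | rfl | rfl | rfl | rfl | rfl | rfl | rfl
  · simp only [Formula.Realize, Term.val, v0, v1]
    intro a b
    simp [Function.update]
  · simp only [Formula.Realize, Term.val, v0]
    intro a
    simp [Function.update]
  · simp only [Formula.Realize, Term.val, v0, v1]
    intro a ha
    refine ⟨a - 1, ?_⟩
    simp [Function.update] at ha ⊢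
    omega
  · simp only [Formula.Realize, Term.val, v0]
    intro a
    simp [Function.update]
  · simp only [Formula.Realize, Term.val, v0, v1]
    intro a b
    simp [Function.update]
    omega
  · simp only [Formula.Realize, Term.val, v0]
    intro a
    simp [Function.update]
  · simp only [Formula.Realize, Term.val, v0, v1]
    intro a b
    simp [Function.update, Nat.mul_succ]
  · simp only [Formula.Realize, Formula.iffF, Term.val, v0, v1, v2]
    intro a b
    constructor
    · intro h
      refine ⟨b - (a + 1), ?_⟩
      simp [Function.update] at h ⊢
      omega
    · rintro ⟨c, hc⟩
      simp [Function.update] at hc ⊢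
      omega

lemma qaxioms_sentences : ∀ ψ ∈ QAxioms, ψ.freeVars = ∅ := by
  intro ψ hψ
  simp only [QAxioms, Set.mem_insert_iff, Set.mem_singleton_iff] at hψ
  rcases hψ with rfl | rfl | rfl | rfl | rfl | rfl | rfl | rfl <;> decide

/-- **Σ-completeness of Q.** Every true Σ sentence is provable in Q. -/
theorem sigma_completeness (σ : Formula) (hσ : σ.IsSentence) (hSigma : IsSigma σ)
    (htrue : IsTrue σ) : Proves QAxioms σ := by
  obtain ⟨ψ, hψSig, hiff⟩ := hSigma
  intro M v hQ
  have hM : QModel M := qModel_of_realize hQ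
  -- the axioms hold at every assignment, being sentences
  have hQ' : ∀ w : ℕ → M.carrier, ∀ χ ∈ QAxioms, Formula.Realize M w χ := by
    intro w χ hχ
    exact (Formula.realize_ext (fun i hi => by
      simp [qaxioms_sentences χ hχ] at hi)).1 (hQ χ hχ)
  -- ψ is true in the standard model
  have hψtrue : ∀ w : ℕ → ℕ, Formula.Realize stdModel w ψ := by
    intro w
    have := hiff stdModel w (std_qModel w)
    exact this.1 (htrue w)
  -- transfer to M at the numeral assignment
  set w₀ : ℕ → ℕ := fun _ => 0 with hw₀
  have hψM : Formula.Realize M (fun i => numM M (w₀ i)) ψ :=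
    sigma_transfer hM hψSig w₀ (hψtrue w₀)
  have hσM : Formula.Realize M (fun i => numM M (w₀ i)) σ := by
    have := hiff M (fun i => numM M (w₀ i)) (hQ' _)
    exact this.2 hψM
  exact (Formula.realize_ext (fun i hi => by
    simp [Formula.IsSentence] at hσ
    simp [hσ] at hi)).1 hσM

end Boolos
end

section
/- Let T be a theory, definable over ω, that contains all sentences i ≠ j for distinct natural numbers i, j (numerals), and suppose Pr_T is definable. With ψ, n, t as in Boolos's construction relative to T, the sentence η ≔ (∀v₀)(ψ(v₀,t) ↔ v₀ = n) is true in the standard model ω, but T does not prove η. -/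
namespace Boolos

/-!
In `ω`, `B(i, 𝐭)` holds exactly when `i` is named by a formula shorter than `𝐭`: any naming
formula can have its variables renamed into `v₀, …, v_{𝐭-1}` without changing its length, and
then `g` bounds its code. Hence `ψ(v₀, t)` says in `ω` that `v₀` is the least number not so
nameable, i.e. `v₀ = n`, and `η` is true. If `T` proved `η`, then `ψ(v₀, t)`, whose length is
below `𝐭`, would name `n` in `T`, against the choice of `n`.
-/

def Term.rename (π : ℕ → ℕ) : Term → Term
  | .var i => .var (π i)
  | .zero => .zero
  | .succ t => .succ (t.rename π)
  | .add t u => .add (t.rename π) (u.rename π)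
  | .mul t u => .mul (t.rename π) (u.rename π)

/-- Renames bound as well as free variables, so for injective `π` no capture can occur. -/
def Formula.rename (π : ℕ → ℕ) : Formula → Formula
  | .eq t u => .eq (t.rename π) (u.rename π)
  | .lt t u => .lt (t.rename π) (u.rename π)
  | .not φ => .not (φ.rename π)
  | .and φ ψ => .and (φ.rename π) (ψ.rename π)
  | .or φ ψ => .or (φ.rename π) (ψ.rename π)
  | .imp φ ψ => .imp (φ.rename π) (ψ.rename π)
  | .all i φ => .all (π i) (φ.rename π)
  | .ex i φ => .ex (π i) (φ.rename π)

namespace Term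

theorem val_congr (M : Struct) {v w : ℕ → M.carrier} (t : Term)
    (h : ∀ i ∈ t.varsOf, v i = w i) : t.val M v = t.val M w := by
  induction t with
  | var i => exact h i (by simp [varsOf])
  | zero => rfl
  | succ t ih => simp_all [val, varsOf]
  | add t u iht ihu | mul t u iht ihu =>
    simp only [varsOf, Finset.mem_union] at h
    simp only [val, iht fun i hi => h i (.inl hi), ihu fun i hi => h i (.inr hi)]

theorem val_subst (M : Struct) (v : ℕ → M.carrier) (t : Term) (x : ℕ) (s : Term) :
    (t.subst x s).val M v = t.val M (Function.update v x (s.val M v)) := by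
  induction t with
  | var i => by_cases hix : i = x <;> simp [subst, val, hix]
  | zero => rfl
  | succ t ih => simp [subst, val, ih]
  | add t u iht ihu | mul t u iht ihu => simp [subst, val, iht, ihu]

theorem varsOf_subst_subset (t : Term) (x : ℕ) (s : Term) :
    (t.subst x s).varsOf ⊆ t.varsOf.erase x ∪ s.varsOf := by
  induction t with
  | var i => by_cases hix : i = x <;> simp [subst, varsOf, hix]
  | zero => simp [subst, varsOf]
  | succ t ih => exact ih
  | add t u iht ihu | mul t u iht ihu =>
    simp only [subst, varsOf, Finset.erase_union_distrib]
    exact Finset.union_subset (iht.trans (by gcongr; simp)) (ihu.trans (by gcongr; simp))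

theorem length_subst_le (t : Term) (x : ℕ) (s : Term) :
    (t.subst x s).length ≤ t.length + t.countOcc x * s.length := by
  induction t with
  | var i => by_cases hix : i = x <;> simp [subst, length, symbols, countOcc, hix]
  | zero => simp [subst, length, symbols, countOcc]
  | succ t ih =>
    simp only [subst, length, symbols, countOcc, List.length_cons] at *
    omega
  | add t u iht ihu | mul t u iht ihu =>
    simp only [subst, length, symbols, countOcc, List.length_append, List.length_cons,
      Nat.add_mul] at *
    omega

theorem card_varsOf_le (t : Term) : t.varsOf.card ≤ t.length := by
  induction t with
  | var i => simp [varsOf, length, symbols]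
  | zero => simp [varsOf, length, symbols]
  | succ t ih => simpa [varsOf, length, symbols] using ih.trans (Nat.le_succ _)
  | add t u iht ihu | mul t u iht ihu =>
    have := Finset.card_union_le t.varsOf u.varsOf
    simp only [varsOf, length, symbols, List.length_append, List.length_cons] at *
    omega

variable (π : ℕ → ℕ)

theorem length_rename (t : Term) : (t.rename π).length = t.length := by
  induction t <;> simp_all [rename, length, symbols]

theorem val_rename (M : Struct) (v : ℕ → M.carrier) (t : Term) :
    (t.rename π).val M v = t.val M (v ∘ π) := by
  induction t <;> simp_all [rename, val]

theorem varsOf_rename (t : Term) : (t.rename π).varsOf = t.varsOf.image π := by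
  induction t <;> simp_all [rename, varsOf, Finset.image_union]

end Term

namespace Formula

theorem realize_congr (M : Struct) {v w : ℕ → M.carrier} (φ : Formula)
    (h : ∀ i ∈ φ.freeVars, v i = w i) : φ.Realize M v ↔ φ.Realize M w := by
  induction φ generalizing v w with
  | eq t u | lt t u =>
    simp only [freeVars, Finset.mem_union] at h
    simp only [Realize, Term.val_congr M t fun i hi => h i (.inl hi),
      Term.val_congr M u fun i hi => h i (.inr hi)]
  | not φ ih => exact not_congr (ih h)
  | and φ ψ ihφ ihψ | or φ ψ ihφ ihψ | imp φ ψ ihφ ihψ =>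
    simp only [freeVars, Finset.mem_union] at h
    simp only [Realize, ihφ fun i hi => h i (.inl hi), ihψ fun i hi => h i (.inr hi)]
  | all i φ ih | ex i φ ih =>
    have hupd (a : M.carrier) : ∀ j ∈ φ.freeVars,
        Function.update v i a j = Function.update w i a j := fun j hj => by
      rcases eq_or_ne j i with rfl | hji
      · simp
      · simpa [hji] using h j (Finset.mem_erase.2 ⟨hji, hj⟩)
    first
    | exact forall_congr' fun a => ih (hupd a)
    | exact exists_congr fun a => ih (hupd a)

theorem realize_subst (M : Struct) (v : ℕ → M.carrier) (φ : Formula) (x : ℕ) {s : Term}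
    (hs : Disjoint s.varsOf φ.allVars) :
    (φ.subst x s).Realize M v ↔ φ.Realize M (Function.update v x (s.val M v)) := by
  induction φ generalizing v with
  | eq t u | lt t u => simp [subst, Realize, Term.val_subst]
  | not φ ih => exact not_congr (ih v hs)
  | and φ ψ ihφ ihψ | or φ ψ ihφ ihψ | imp φ ψ ihφ ihψ =>
    simp only [allVars, Finset.disjoint_union_right] at hs
    simp only [subst, Realize, (ihφ · hs.1), (ihψ · hs.2)]
  | all i φ ih | ex i φ ih =>
    simp only [allVars, Finset.disjoint_insert_right] at hs
    have hval (a : M.carrier) : s.val M (Function.update v i a) = s.val M v :=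
      Term.val_congr M s fun j hj => Function.update_of_ne (ne_of_mem_of_not_mem hj hs.1) a v
    by_cases hix : i = x
    · subst hix
      simp [subst, Realize]
    · simp only [subst, if_neg hix, Realize, (ih · hs.2), hval, Function.update_comm hix]

theorem freeVars_subst_subset (φ : Formula) (x : ℕ) (s : Term) :
    (φ.subst x s).freeVars ⊆ φ.freeVars.erase x ∪ s.varsOf := by
  induction φ with
  | eq t u | lt t u =>
    simp only [subst, freeVars, Finset.erase_union_distrib]
    exact Finset.union_subset ((Term.varsOf_subst_subset t x s).trans (by gcongr; simp))
      ((Term.varsOf_subst_subset u x s).trans (by gcongr; simp))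
  | not φ ih => exact ih
  | and φ ψ ihφ ihψ | or φ ψ ihφ ihψ | imp φ ψ ihφ ihψ =>
    simp only [subst, freeVars, Finset.erase_union_distrib]
    exact Finset.union_subset (ihφ.trans (by gcongr; simp)) (ihψ.trans (by gcongr; simp))
  | all i φ ih | ex i φ ih =>
    by_cases hix : i = x
    · subst hix
      simp [subst, freeVars, Finset.subset_union_left]
    · simp only [subst, if_neg hix, freeVars]
      intro j hj
      have := ih (Finset.mem_of_mem_erase hj)
      simp only [Finset.mem_union, Finset.mem_erase] at this hj ⊢
      tauto

theorem length_subst_le (φ : Formula) (x : ℕ) (s : Term) :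
    (φ.subst x s).length ≤ φ.length + φ.countFreeOcc x * s.length := by
  induction φ with
  | eq t u | lt t u =>
    have := t.length_subst_le x s
    have := u.length_subst_le x s
    simp only [subst, length, symbols, countFreeOcc, List.length_append, List.length_cons,
      Nat.add_mul, Term.length] at *
    omega
  | not φ ih =>
    simp only [subst, length, symbols, countFreeOcc, List.length_cons] at *
    omega
  | and φ ψ ihφ ihψ | or φ ψ ihφ ihψ | imp φ ψ ihφ ihψ =>
    simp only [subst, length, symbols, countFreeOcc, List.length_append, List.length_cons,
      Nat.add_mul] at *
    omega
  | all i φ ih | ex i φ ih =>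
    by_cases hix : i = x
    · simp [subst, countFreeOcc, hix]
    · simp only [subst, if_neg hix, length, symbols, List.length_cons, countFreeOcc] at *
      omega

theorem length_pos (φ : Formula) : 0 < φ.length := by
  cases φ <;> simp [length, symbols]

theorem card_allVars_le (φ : Formula) : φ.allVars.card ≤ φ.length := by
  induction φ with
  | eq t u | lt t u =>
    have := Finset.card_union_le t.varsOf u.varsOf
    have := t.card_varsOf_le
    have := u.card_varsOf_le
    simp only [allVars, length, symbols, List.length_append, List.length_cons,
      Term.length] at *
    omega
  | not φ ih => simpa [allVars, length, symbols] using ih.trans (Nat.le_succ _)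
  | and φ ψ ihφ ihψ | or φ ψ ihφ ihψ | imp φ ψ ihφ ihψ =>
    have := Finset.card_union_le φ.allVars ψ.allVars
    simp only [allVars, length, symbols, List.length_append, List.length_cons] at *
    omega
  | all i φ ih | ex i φ ih =>
    have := Finset.card_insert_le i φ.allVars
    simp only [allVars, length, symbols, List.length_cons] at *
    omega

variable (π : ℕ → ℕ)

theorem length_rename (φ : Formula) : (φ.rename π).length = φ.length := by
  induction φ <;> simp_all [rename, length, symbols, ← Term.length.eq_1, Term.length_rename]

theorem allVars_rename (φ : Formula) : (φ.rename π).allVars = φ.allVars.image π := by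
  induction φ <;> simp_all [rename, allVars, Finset.image_union, Term.varsOf_rename]

variable {π}

theorem freeVars_rename (hπ : π.Injective) (φ : Formula) :
    (φ.rename π).freeVars = φ.freeVars.image π := by
  induction φ <;>
    simp_all [rename, freeVars, Finset.image_union, Term.varsOf_rename, Finset.image_erase]

theorem realize_rename (M : Struct) (hπ : π.Injective) (v : ℕ → M.carrier) (φ : Formula) :
    (φ.rename π).Realize M v ↔ φ.Realize M (v ∘ π) := by
  induction φ generalizing v <;>
    simp_all [rename, Realize, Term.val_rename, Function.update_comp_eq_of_injective]

end Formula

@[simp] theorem varsOf_numeral (m : ℕ) : (numeral m).varsOf = ∅ := by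
  induction m <;> simp_all [numeral, Term.varsOf]

theorem length_numeral (m : ℕ) : (numeral m).length = m + 1 := by
  induction m <;> simp_all [numeral, Term.length, Term.symbols]

@[simp] theorem val_numeral_s15 (v : ℕ → ℕ) (m : ℕ) : (numeral m).val stdModel v = m := by
  induction m <;> simp_all [numeral, Term.val]

@[simp] theorem varsOf_tTerm (k : ℕ) : (tTerm k).varsOf = ∅ := by
  simp [tTerm, Term.varsOf]

@[simp] theorem val_tTerm (v : ℕ → ℕ) (k : ℕ) :
    (tTerm k).val stdModel v = 10 * (k * k) := by
  simp [tTerm, Term.val]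

theorem length_tTerm (k : ℕ) : (tTerm k).length = 2 * k + 15 := by
  have := length_numeral 10
  have := length_numeral k
  simp only [tTerm, Term.length, Term.symbols, List.length_append, List.length_cons] at *
  omega

/-- The bound `|ψ(v₀,t)| < 𝐭`: each of the fewer than `k₂ ≤ k` free occurrences of `v_x` is
replaced by `t`, of length `2k + 15`. -/
theorem length_subst_tTerm_lt (ψ : Formula) (x : ℕ) {k₂ k : ℕ}
    (hk₂ : ψ.countFreeOcc x < k₂) (hk : k = ψ.length * k₂) :
    (ψ.subst x (tTerm k)).length < 10 * (k * k) := by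
  have hsubst := ψ.length_subst_le x (tTerm k)
  rw [length_tTerm] at hsubst
  have hlen : ψ.length ≤ k := hk ▸ Nat.le_mul_of_pos_right _ (by omega)
  have hocc : ψ.countFreeOcc x < k :=
    hk ▸ hk₂.trans_le (Nat.le_mul_of_pos_left _ ψ.length_pos)
  nlinarith

theorem Names.rename {T : Set Formula} {μ : Formula} {m : ℕ} {π : ℕ → ℕ}
    (hπ : π.Injective) (hπ0 : π 0 = 0) (h : Names T μ m) : Names T (μ.rename π) m := by
  obtain ⟨hfv, hpr⟩ := h
  refine ⟨?_, fun M v hT a => ?_⟩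
  · rw [Formula.freeVars_rename hπ]
    simpa [hπ0] using Finset.image_subset_image (f := π) hfv
  · have hμ : (μ.rename π).Realize M (Function.update v 0 a) ↔
        μ.Realize M (Function.update v 0 a) := by
      rw [Formula.realize_rename M hπ]
      refine Formula.realize_congr M μ fun i hi => ?_
      obtain rfl : i = 0 := by simpa using hfv hi
      simp [hπ0]
    simpa only [Formula.iffF, Formula.Realize, hμ] using hpr M v hT a

/-- Ranking the elements of `S` by the number of smaller ones compresses `S` into
`Finset.range S.card` while keeping `0` in place. -/
theorem exists_injective_mapsTo_range {S : Finset ℕ} {j : ℕ} (h0 : 0 ∈ S)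
    (hS : S.card ≤ j) : ∃ π : ℕ → ℕ, π.Injective ∧ π 0 = 0 ∧ ∀ x ∈ S, π x < j := by
  set rank : ℕ → ℕ := fun x => (S.filter fun y => y < x).card
  have rank_lt {x} (hx : x ∈ S) : rank x < j :=
    (Finset.card_lt_card (Finset.filter_ssubset.2 ⟨x, hx, lt_irrefl x⟩ :
      (S.filter fun y => y < x) ⊂ S)).trans_le hS
  have rank_strictMonoOn : StrictMonoOn rank S := fun x hx y _ hxy =>
    Finset.card_lt_card <| (Finset.ssubset_iff_of_subset fun z => by
      simp only [Finset.mem_filter]; exact And.imp_right (·.trans hxy)).2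
      ⟨x, by simpa [hxy] using hx, by simp⟩
  refine ⟨fun x => if x ∈ S then rank x else j + x, fun x y hxy => ?_,
    by simp [h0, rank], fun x hx => by simpa [hx] using rank_lt hx⟩
  by_cases hx : x ∈ S <;> by_cases hy : y ∈ S <;> simp only [hx, hy, if_true, if_false] at hxy
  · exact rank_strictMonoOn.injOn hx hy hxy
  · exact absurd hxy ((rank_lt hx).trans_le (Nat.le_add_right j y)).ne
  · exact absurd hxy ((rank_lt hy).trans_le (Nat.le_add_right j x)).ne'
  · omega

theorem brel_iff_nameable {T : Set Formula} {g : ℕ → ℕ} (hg : GoodBound g) {i j : ℕ} :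
    BRel T g i j ↔ Nameable T j i := by
  refine ⟨fun ⟨μ, _, hlen, hμ⟩ => ⟨μ, hlen, hμ⟩, fun ⟨μ, hlen, hμ⟩ => ?_⟩
  have hcard : (insert 0 μ.allVars).card ≤ j :=
    (Finset.card_insert_le _ _).trans (by linarith [μ.card_allVars_le])
  obtain ⟨π, hπ, hπ0, hπj⟩ :=
    exists_injective_mapsTo_range (Finset.mem_insert_self _ _) hcard
  have hvars : (μ.rename π).allVars ⊆ Finset.range j := by
    rw [Formula.allVars_rename, Finset.image_subset_iff]
    exact fun x hx => Finset.mem_range.2 (hπj x (Finset.mem_insert_of_mem hx))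
  rw [← Formula.length_rename π] at hlen
  exact ⟨μ.rename π, hg.2 _ _ hvars hlen, hlen, hμ.rename hπ hπ0⟩

theorem DefinesRel.realize_iff {φ : Formula} {R : ℕ → ℕ → Prop} (h : DefinesRel φ R)
    (v : ℕ → ℕ) : φ.Realize stdModel v ↔ R (v 0) (v 1) := by
  have hclosed (w : ℕ → ℕ) :
      ((φ.subst 0 (numeral (v 0))).subst 1 (numeral (v 1))).Realize stdModel w ↔
        φ.Realize stdModel v := by
    rw [Formula.realize_subst _ _ _ _ (by simp), Formula.realize_subst _ _ _ _ (by simp)]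
    refine Formula.realize_congr _ φ fun i hi => ?_
    obtain rfl | rfl : i = 0 ∨ i = 1 := by simpa using h.1 hi
    all_goals simp
  rw [h.2]
  exact ⟨fun hv w => (hclosed w).2 hv, fun hv => (hclosed v).1 (hv v)⟩

section psiOf

variable {φ : Formula}

theorem freeVars_psiOf_subset (hφ : φ.freeVars ⊆ {0, 1}) : (psiOf φ).freeVars ⊆ {0, 1} := by
  have hsubst := (φ.freeVars_subst_subset 0 v2).trans
    (Finset.union_subset_union (Finset.erase_subset_erase 0 hφ) le_rfl)
  intro x hx
  simp only [psiOf, Formula.freeVars, v0, v2, Term.varsOf, Finset.mem_union,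
    Finset.mem_erase, Finset.mem_singleton] at hx
  rcases hx with hx | ⟨hx2, (rfl | rfl) | hx⟩
  · exact hφ hx
  · exact absurd rfl hx2
  · simp
  · simp [show x = 1 by simpa [hx2, v2, Term.varsOf] using hsubst hx]

variable {R : ℕ → ℕ → Prop}

theorem realize_psiOf (hφ : DefinesRel φ R) (h2 : 2 ∉ φ.allVars) (v : ℕ → ℕ) :
    (psiOf φ).Realize stdModel v ↔ ¬ R (v 0) (v 1) ∧ ∀ b < v 0, R b (v 1) := by
  have hsubst (b : ℕ) :
      (φ.subst 0 v2).Realize stdModel (Function.update v 2 b) ↔ R b (v 1) := by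
    rw [Formula.realize_subst _ _ _ _ (by simpa [v2, Term.varsOf] using h2), hφ.realize_iff]
    simp [v2, Term.val]
  simp only [psiOf, Formula.Realize, hsubst, hφ.realize_iff]
  simp [v0, v2, Term.val]

theorem realize_psiOf_subst (hφ : DefinesRel φ R) (h2 : 2 ∉ φ.allVars) {s : Term}
    (hs : s.varsOf = ∅) (v : ℕ → ℕ) :
    ((psiOf φ).subst 1 s).Realize stdModel v ↔
      ¬ R (v 0) (s.val stdModel v) ∧ ∀ b < v 0, R b (s.val stdModel v) := by
  rw [Formula.realize_subst _ _ _ _ (by simp [hs]), realize_psiOf hφ h2]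
  simp

end psiOf

theorem not_and_forall_lt_iff_eq {P : ℕ → Prop} {n : ℕ} (hn : ¬ P n) (hlt : ∀ m < n, P m)
    (a : ℕ) : (¬ P a ∧ ∀ b < a, P b) ↔ a = n := by
  refine ⟨fun ⟨ha, hb⟩ => ?_, fun h => h ▸ ⟨hn, hlt⟩⟩
  rcases lt_trichotomy a n with h | h | h
  exacts [absurd (hlt a h) ha, h, absurd (hb n h) hn]

theorem boolos_footnote_general
    (T : Set Formula)
    (g : ℕ → ℕ) (hg : GoodBound g)
    (φ : Formula) (hφ : DefinesRel φ (BRel T g)) (hφ2 : 2 ∉ φ.allVars)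
    (k₂ : ℕ) (hk₂ : (psiOf φ).countFreeOcc 1 < k₂)
    (k : ℕ) (hk : k = (psiOf φ).length * k₂)
    (n : ℕ) (hn : ¬ Nameable T (10 * (k * k)) n)
    (hleast : ∀ m < n, Nameable T (10 * (k * k)) m) :
    IsTrue (.all 0 (Formula.iffF ((psiOf φ).subst 1 (tTerm k)) (.eq v0 (numeral n)))) ∧
      ¬ Proves T
        (.all 0 (Formula.iffF ((psiOf φ).subst 1 (tTerm k)) (.eq v0 (numeral n)))) := by
  have hψ (v : ℕ → ℕ) : ((psiOf φ).subst 1 (tTerm k)).Realize stdModel v ↔ v 0 = n := by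
    simpa only [realize_psiOf_subst hφ hφ2 (varsOf_tTerm k), val_tTerm, brel_iff_nameable hg]
      using not_and_forall_lt_iff_eq hn hleast (v 0)
  have hfv : ((psiOf φ).subst 1 (tTerm k)).freeVars ⊆ {0} := by
    refine ((psiOf φ).freeVars_subst_subset 1 _).trans ?_
    rw [varsOf_tTerm, Finset.union_empty]
    exact (Finset.erase_subset_erase 1 (freeVars_psiOf_subset hφ.1)).trans (by decide)
  refine ⟨fun v a => ?_, fun hprov => hn ⟨_, length_subst_tTerm_lt _ 1 hk₂ hk, hfv, hprov⟩⟩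
  simp [Formula.iffF, Formula.Realize, hψ, v0, Term.val]

/-- **Footnote version of Boolos's theorem.** If T is a definable theory containing all
sentences i ≠ j (for distinct i, j) with Pr_T definable, then the sentence
η ≔ (∀v₀)(ψ(v₀,t) ↔ v₀ = n) is true but unprovable in T. -/
theorem boolos_footnote
    (T : Set Formula) (hTsent : ∀ σ ∈ T, σ.IsSentence)
    (hTdef : Definable {m : ℕ | ∃ σ ∈ T, m = Formula.gnum σ})
    (hTneq : ∀ i j : ℕ, i ≠ j → Formula.not (.eq (numeral i) (numeral j)) ∈ T)
    (hdef : Definable (PrSet T))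
    (g : ℕ → ℕ) (hg : GoodBound g)
    (φ : Formula) (hφ : DefinesRel φ (BRel T g)) (hφ2 : 2 ∉ φ.allVars)
    (k₂ : ℕ) (hk₂ : (psiOf φ).countFreeOcc 1 < k₂)
    (k : ℕ) (hk : k = (psiOf φ).length * k₂)
    (n : ℕ) (hn : ¬ Nameable T (10 * (k * k)) n)
    (hleast : ∀ m < n, Nameable T (10 * (k * k)) m) :
    IsTrue (.all 0 (Formula.iffF ((psiOf φ).subst 1 (tTerm k)) (.eq v0 (numeral n)))) ∧
      ¬ Proves T
        (.all 0 (Formula.iffF ((psiOf φ).subst 1 (tTerm k)) (.eq v0 (numeral n)))) :=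
  boolos_footnote_general T g hg φ hφ hφ2 k₂ hk₂ k hk n hn hleast

end Boolos
end
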